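/- Let d ≥ 3. For every nonzero x ∈ ℝ^d and t ≥ 0, ∫₀^t ∫_{ℝ^d} p_s(y) |y - x|^{-2} dy ds ≤ (2/(d-2)) (log⁺(1/|x|) + 1 + √d √t), where log⁺ u = max(log u, 0). -/

import Mathlib

/-!
Writing `|z|⁻² = ∫₀^∞ e^{-r|z|²} dr` and integrating the Gaussian against the heat kernel gives
`∫ p_s(y) |y - x|⁻² dy = ∫₀^∞ (1 + 2sr)^{-d/2} exp (-r |x|² / (1 + 2sr)) dr`.
Dropping the exponential bounds this by `1 / ((d - 2) s)`; bounding the integrand by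
`exp (-r |x|² / 2)` for `r ≤ 1 / (2s)` and by `exp (-|x|² / (4s)) (1 + 2sr)^{-d/2}` beyond bounds
it by `2d / ((d - 2) |x|²)`. Integrating the minimum of the two bounds over `s ∈ (0, t]`, switching
at `s = |x|² / (2d)`, gives at most `(1 + log⁺ (2dt / |x|²)) / (d - 2)`, which `log (2u) ≤ 2 √u`
turns into the stated bound.
-/

open MeasureTheory Real Filter Topology

noncomputable def heatKernel (d : ℕ) (t : ℝ) (y : EuclideanSpace ℝ (Fin d)) : ℝ :=
  (2 * Real.pi * t) ^ (-(d : ℝ) / 2) * Real.exp (-‖y‖ ^ 2 / (2 * t))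

open Set

lemma two_mul_le_exp (v : ℝ) : 2 * v ≤ exp v := by
  rcases le_total v 0 with hv | hv
  · linarith [exp_pos v]
  · nlinarith [quadratic_le_exp_of_nonneg hv]

lemma log_two_mul_le_two_mul_sqrt {u : ℝ} (hu : 0 ≤ u) : log (2 * u) ≤ 2 * √u := by
  rcases hu.eq_or_lt with rfl | hu
  · simp
  rw [log_le_iff_le_exp (by positivity)]
  have := quadratic_le_exp_of_nonneg (by positivity : 0 ≤ 2 * √u)
  nlinarith [sq_sqrt hu.le, sqrt_nonneg u]

lemma max_log_two_mul_div_sq_le {a u : ℝ} (ha : a ≠ 0) (hu : 0 ≤ u) :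
    max (log (2 * u / a ^ 2)) 0 ≤ 2 * (max (log (1 / a)) 0 + √u) := by
  have hL := le_max_left (log (1 / a)) 0
  refine max_le ?_ (by positivity)
  rcases hu.eq_or_lt with rfl | hu
  · simp only [mul_zero, zero_div, log_zero]; positivity
  have hsplit : log (2 * u / a ^ 2) = log (2 * u) + 2 * log (1 / a) := by
    rw [log_div (by positivity) (by positivity), log_pow, one_div, log_inv]
    push_cast
    ring
  linarith [log_two_mul_le_two_mul_sqrt hu.le]

lemma integral_exp_neg_mul_Ioi {c : ℝ} (hc : 0 < c) : ∫ r in Ioi 0, exp (-c * r) = c⁻¹ := by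
  rw [integral_exp_mul_Ioi (neg_neg_of_pos hc)]
  simp

lemma ofReal_mul_inv_eq_lintegral_exp {c w : ℝ} (hc : 0 ≤ c) (hw : 0 < w) :
    ENNReal.ofReal (c * w⁻¹) = ∫⁻ r in Ioi 0, ENNReal.ofReal (c * exp (-r * w)) := by
  have hcomm : ∀ r, -r * w = -w * r := fun r => by ring
  simp_rw [hcomm]
  rw [← ofReal_integral_eq_lintegral_ofReal
    ((integrableOn_exp_mul_Ioi (neg_neg_of_pos hw) 0).const_mul c)
    (ae_of_all _ fun r => by positivity), integral_const_mul, integral_exp_neg_mul_Ioi hw]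

lemma integral_Ioi_one_add_mul_rpow_neg {b p : ℝ} (hb : 0 < b) (hp : 1 < p) :
    ∫ r in Ioi 0, (1 + b * r) ^ (-p) = ((p - 1) * b)⁻¹ := by
  have hderiv : ∀ r ∈ Ici (0 : ℝ), HasDerivAt (fun r => -((p - 1) * b)⁻¹ * (1 + b * r) ^ (1 - p))
      ((1 + b * r) ^ (-p)) r := by
    intro r hr
    have hpos : 0 < 1 + b * r := by have : (0 : ℝ) ≤ r := hr; positivity
    have := ((((hasDerivAt_id r).const_mul b).const_add 1).rpow_const
      (p := 1 - p) (Or.inl hpos.ne')).const_mul (-((p - 1) * b)⁻¹)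
    refine this.congr_deriv ?_
    have hp1 : p - 1 ≠ 0 := by linarith
    rw [show 1 - p - 1 = -p by ring, id]
    field_simp
    ring
  have htendsto : Tendsto (fun r => -((p - 1) * b)⁻¹ * (1 + b * r) ^ (1 - p)) atTop (𝓝 0) := by
    have hlin : Tendsto (fun r : ℝ => 1 + b * r) atTop atTop :=
      tendsto_atTop_add_const_left _ _ (tendsto_id.const_mul_atTop hb)
    have := ((tendsto_rpow_neg_atTop (by linarith : 0 < p - 1)).comp hlin).const_mul
      (-((p - 1) * b)⁻¹)
    simpa [Function.comp_def] using this
  rw [integral_Ioi_of_hasDerivAt_of_nonneg' hderiv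
    (fun r hr => rpow_nonneg (by have : (0 : ℝ) < r := hr; positivity) _) htendsto]
  simp

lemma integrableOn_Ioi_one_add_mul_rpow_neg {b p : ℝ} (hb : 0 < b) (hp : 1 < p) :
    IntegrableOn (fun r => (1 + b * r) ^ (-p)) (Ioi 0) :=
  .of_integral_ne_zero <| by
    rw [integral_Ioi_one_add_mul_rpow_neg hb hp]
    have : 0 < p - 1 := by linarith
    positivity

section Gaussian

variable {V : Type*} [NormedAddCommGroup V] [InnerProductSpace ℝ V]

lemma exp_neg_mul_sq_norm_mul_exp_neg_mul_sq_norm_sub {α r : ℝ} (h : 0 < α + r) (x y : V) :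
    exp (-α * ‖y‖ ^ 2) * exp (-r * ‖y - x‖ ^ 2) =
      exp (-(α * r / (α + r)) * ‖x‖ ^ 2) * exp (-(α + r) * ‖y - (r / (α + r)) • x‖ ^ 2) := by
  rw [← exp_add, ← exp_add, norm_sub_sq_real, norm_sub_sq_real, inner_smul_right, norm_smul,
    mul_pow, Real.norm_eq_abs, sq_abs]
  congr 1
  field_simp
  ring

variable [FiniteDimensional ℝ V] [MeasurableSpace V] [BorelSpace V]

lemma integrable_exp_neg_mul_sq_norm {α : ℝ} (hα : 0 < α) :
    Integrable (fun y : V => exp (-α * ‖y‖ ^ 2)) :=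
  .of_integral_ne_zero <| by
    rw [GaussianFourier.integral_rexp_neg_mul_sq_norm hα]
    positivity

lemma integrable_exp_neg_mul_sq_norm_mul_exp_neg_mul_sq_norm_sub {α r : ℝ} (hα : 0 < α)
    (hr : 0 ≤ r) (x : V) :
    Integrable (fun y : V => exp (-α * ‖y‖ ^ 2) * exp (-r * ‖y - x‖ ^ 2)) := by
  have h : 0 < α + r := by positivity
  simp_rw [exp_neg_mul_sq_norm_mul_exp_neg_mul_sq_norm_sub h]
  exact ((integrable_exp_neg_mul_sq_norm h).comp_sub_right _).const_mul _

lemma integral_exp_neg_mul_sq_norm_mul_exp_neg_mul_sq_norm_sub {α r : ℝ} (hα : 0 < α)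
    (hr : 0 ≤ r) (x : V) :
    ∫ y : V, exp (-α * ‖y‖ ^ 2) * exp (-r * ‖y - x‖ ^ 2) =
      (π / (α + r)) ^ (Module.finrank ℝ V / 2 : ℝ) * exp (-(α * r / (α + r)) * ‖x‖ ^ 2) := by
  have h : 0 < α + r := by positivity
  simp_rw [exp_neg_mul_sq_norm_mul_exp_neg_mul_sq_norm_sub h, integral_const_mul,
    integral_sub_right_eq_self (fun y => exp (-(α + r) * ‖y‖ ^ 2)),
    GaussianFourier.integral_rexp_neg_mul_sq_norm h]
  ring

end Gaussian

/-- The value of `∫ p_s(y) exp (-r ‖y - x‖²) dy` when `‖x‖ = a`. -/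
noncomputable def heatGaussian (d : ℕ) (s a r : ℝ) : ℝ :=
  (1 + 2 * s * r) ^ (-((d : ℝ) / 2)) * exp (-(r / (1 + 2 * s * r)) * a ^ 2)

lemma heatGaussian_nonneg {d : ℕ} {s a r : ℝ} (hs : 0 ≤ s) (hr : 0 ≤ r) :
    0 ≤ heatGaussian d s a r := by
  unfold heatGaussian; positivity

section HeatKernel

variable {d : ℕ} {s r : ℝ}

lemma heatKernel_eq (s : ℝ) (y : EuclideanSpace ℝ (Fin d)) :
    heatKernel d s y = (2 * π * s) ^ (-((d : ℝ) / 2)) * exp (-(2 * s)⁻¹ * ‖y‖ ^ 2) := by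
  rw [heatKernel, neg_div, neg_mul, ← div_eq_inv_mul, neg_div]

lemma heatKernel_nonneg (hs : 0 ≤ s) (y : EuclideanSpace ℝ (Fin d)) : 0 ≤ heatKernel d s y := by
  rw [heatKernel]; positivity

@[fun_prop]
lemma continuous_heatKernel (s : ℝ) : Continuous (heatKernel d s) := by
  unfold heatKernel; fun_prop

lemma integrable_heatKernel_mul_exp (hs : 0 < s) (hr : 0 ≤ r) (x : EuclideanSpace ℝ (Fin d)) :
    Integrable (fun y => heatKernel d s y * exp (-r * ‖y - x‖ ^ 2)) := by
  simp_rw [heatKernel_eq, mul_assoc ((2 * π * s) ^ (-((d : ℝ) / 2)))]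
  exact (integrable_exp_neg_mul_sq_norm_mul_exp_neg_mul_sq_norm_sub (by positivity) hr x).const_mul
    _

lemma integral_heatKernel_mul_exp (hs : 0 < s) (hr : 0 ≤ r) (x : EuclideanSpace ℝ (Fin d)) :
    ∫ y, heatKernel d s y * exp (-r * ‖y - x‖ ^ 2) = heatGaussian d s ‖x‖ r := by
  have h1 : 0 < 1 + 2 * s * r := by positivity
  simp_rw [heatKernel_eq, mul_assoc ((2 * π * s) ^ (-((d : ℝ) / 2)))]
  rw [integral_const_mul,
    integral_exp_neg_mul_sq_norm_mul_exp_neg_mul_sq_norm_sub (inv_pos.2 (by positivity)) hr,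
    finrank_euclideanSpace_fin, heatGaussian, ← mul_assoc]
  have hbase : π / ((2 * s)⁻¹ + r) = 2 * π * s * (1 + 2 * s * r)⁻¹ := by
    field_simp
  have hexp : (2 * s)⁻¹ * r / ((2 * s)⁻¹ + r) = r / (1 + 2 * s * r) := by
    field_simp
  rw [hbase, hexp, mul_rpow (x := 2 * π * s) (by positivity) (by positivity), ← mul_assoc,
    ← rpow_add (by positivity), neg_add_cancel, rpow_zero, one_mul, inv_rpow h1.le,
    ← rpow_neg h1.le]

end HeatKernel

lemma integral_heatKernel_mul_rpow_neg_two {d : ℕ} (hd : d ≠ 0) {s : ℝ} (hs : 0 < s)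
    (x : EuclideanSpace ℝ (Fin d)) :
    ∫ y, heatKernel d s y * ‖y - x‖ ^ (-2 : ℝ) = ∫ r in Ioi 0, heatGaussian d s ‖x‖ r := by
  have : Nonempty (Fin d) := ⟨⟨0, Nat.pos_of_ne_zero hd⟩⟩
  -- At `y = x` the integrand is the junk value `0 ^ (-2 : ℝ) = 0`, not `∫ exp (-r * 0) = ∞`.
  have hae : ∀ᵐ y : EuclideanSpace ℝ (Fin d), y ≠ x := by
    simp [ae_iff, measure_singleton]
  have hlin : ∫⁻ y, ENNReal.ofReal (heatKernel d s y * ‖y - x‖ ^ (-2 : ℝ)) =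
      ∫⁻ r in Ioi 0, ENNReal.ofReal (heatGaussian d s ‖x‖ r) := calc
    _ = ∫⁻ y, ∫⁻ r in Ioi 0, ENNReal.ofReal (heatKernel d s y * exp (-r * ‖y - x‖ ^ 2)) := by
      refine lintegral_congr_ae (hae.mono fun y hy => ?_)
      dsimp only
      rw [rpow_neg (norm_nonneg _), rpow_two]
      exact ofReal_mul_inv_eq_lintegral_exp (heatKernel_nonneg hs.le y)
        (pow_pos (norm_pos_iff.2 (sub_ne_zero.2 hy)) 2)
    _ = ∫⁻ r in Ioi 0, ∫⁻ y, ENNReal.ofReal (heatKernel d s y * exp (-r * ‖y - x‖ ^ 2)) :=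
      lintegral_lintegral_swap (by fun_prop)
    _ = ∫⁻ r in Ioi 0, ENNReal.ofReal (heatGaussian d s ‖x‖ r) := by
      refine setLIntegral_congr_fun measurableSet_Ioi fun r hr => ?_
      rw [← integral_heatKernel_mul_exp hs (le_of_lt hr), ofReal_integral_eq_lintegral_ofReal
        (integrable_heatKernel_mul_exp hs (le_of_lt hr) x)
        (Eventually.of_forall fun y => mul_nonneg (heatKernel_nonneg hs.le y) (exp_pos _).le)]
  rw [integral_eq_lintegral_of_nonneg_ae
      (ae_of_all _ fun y => mul_nonneg (heatKernel_nonneg hs.le y) (by positivity))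
      (by fun_prop : Measurable _).aestronglyMeasurable,
    integral_eq_lintegral_of_nonneg_ae
      ((ae_restrict_iff' measurableSet_Ioi).2 (ae_of_all _ fun r hr =>
        heatGaussian_nonneg hs.le (le_of_lt hr)))
      (by unfold heatGaussian; fun_prop : Measurable _).aestronglyMeasurable, hlin]

section Bounds

variable {d : ℕ} {s a r : ℝ}

lemma heatGaussian_le_rpow (hs : 0 ≤ s) (hr : 0 ≤ r) :
    heatGaussian d s a r ≤ (1 + 2 * s * r) ^ (-((d : ℝ) / 2)) :=
  mul_le_of_le_one_right (by positivity) (exp_le_one_iff.2 (by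
    have : 0 ≤ r / (1 + 2 * s * r) * a ^ 2 := by positivity
    linarith))

lemma heatGaussian_le_exp_add (hs : 0 < s) (hr : 0 ≤ r) :
    heatGaussian d s a r ≤
      exp (-(a ^ 2 / 2) * r) + exp (-(a ^ 2 / (4 * s))) * (1 + 2 * s * r) ^ (-((d : ℝ) / 2)) := by
  have h1 : 0 < 1 + 2 * s * r := by positivity
  have hpow : 0 ≤ (1 + 2 * s * r) ^ (-((d : ℝ) / 2)) := by positivity
  unfold heatGaussian
  rcases le_total (2 * s * r) 1 with h | h
  · have hexp : exp (-(r / (1 + 2 * s * r)) * a ^ 2) ≤ exp (-(a ^ 2 / 2) * r) := by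
      rw [exp_le_exp, neg_mul, neg_mul, neg_le_neg_iff,
        show r / (1 + 2 * s * r) * a ^ 2 = r * a ^ 2 / (1 + 2 * s * r) by ring, le_div_iff₀ h1]
      nlinarith [mul_nonneg (mul_nonneg (sq_nonneg a) hr) (sub_nonneg.2 h)]
    have hpow1 : (1 + 2 * s * r) ^ (-((d : ℝ) / 2)) ≤ 1 :=
      rpow_le_one_of_one_le_of_nonpos (le_add_of_nonneg_right (by positivity))
        (neg_nonpos.2 (by positivity))
    calc _ ≤ 1 * exp (-(a ^ 2 / 2) * r) := mul_le_mul hpow1 hexp (exp_pos _).le zero_le_one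
      _ ≤ _ := by rw [one_mul]; exact le_add_of_nonneg_right (by positivity)
  · have hexp : exp (-(r / (1 + 2 * s * r)) * a ^ 2) ≤ exp (-(a ^ 2 / (4 * s))) := by
      rw [exp_le_exp, neg_mul, neg_le_neg_iff, div_mul_eq_mul_div,
        div_le_div_iff₀ (by positivity) h1]
      nlinarith [mul_nonneg (sq_nonneg a) (sub_nonneg.2 h)]
    calc _ ≤ (1 + 2 * s * r) ^ (-((d : ℝ) / 2)) * exp (-(a ^ 2 / (4 * s))) :=
          mul_le_mul_of_nonneg_left hexp hpow
      _ ≤ _ := by rw [mul_comm]; exact le_add_of_nonneg_left (by positivity)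

lemma integral_heatGaussian_le_inv (hd : 2 < d) (hs : 0 < s) :
    ∫ r in Ioi 0, heatGaussian d s a r ≤ ((d - 2) * s)⁻¹ := by
  have hp : 1 < (d : ℝ) / 2 := by
    rw [lt_div_iff₀ two_pos]; exact_mod_cast hd
  have hb : 0 < 2 * s := by positivity
  calc _ ≤ ∫ r in Ioi 0, (1 + 2 * s * r) ^ (-((d : ℝ) / 2)) :=
        integral_mono_of_nonneg
          ((ae_restrict_iff' measurableSet_Ioi).2 (ae_of_all _ fun r hr =>
            heatGaussian_nonneg hs.le (le_of_lt hr)))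
          (integrableOn_Ioi_one_add_mul_rpow_neg hb hp)
          ((ae_restrict_iff' measurableSet_Ioi).2 (ae_of_all _ fun r hr =>
            heatGaussian_le_rpow hs.le (le_of_lt hr)))
    _ = ((d - 2) * s)⁻¹ := by
      rw [integral_Ioi_one_add_mul_rpow_neg hb hp]
      ring

lemma integral_heatGaussian_le_div_sq (hd : 2 < d) (hs : 0 < s) (ha : a ≠ 0) :
    ∫ r in Ioi 0, heatGaussian d s a r ≤ 2 * d / ((d - 2) * a ^ 2) := by
  have hp : 1 < (d : ℝ) / 2 := by
    rw [lt_div_iff₀ two_pos]; exact_mod_cast hd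
  have hd2 : (0 : ℝ) < d - 2 := by
    have : (2 : ℝ) < d := by exact_mod_cast hd
    linarith
  have hb : 0 < 2 * s := by positivity
  have ha2 : 0 < a ^ 2 := by positivity
  have hexp : exp (-(a ^ 2 / (4 * s))) ≤ 2 * s / a ^ 2 := by
    rw [exp_neg, inv_le_comm₀ (exp_pos _) (by positivity), inv_div]
    calc a ^ 2 / (2 * s) = 2 * (a ^ 2 / (4 * s)) := by ring
      _ ≤ _ := two_mul_le_exp _
  calc _ ≤ ∫ r in Ioi 0, (exp (-(a ^ 2 / 2) * r) +
        exp (-(a ^ 2 / (4 * s))) * (1 + 2 * s * r) ^ (-((d : ℝ) / 2))) :=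
        integral_mono_of_nonneg
          ((ae_restrict_iff' measurableSet_Ioi).2 (ae_of_all _ fun r hr =>
            heatGaussian_nonneg hs.le (le_of_lt hr)))
          ((integrableOn_exp_mul_Ioi (by linarith) 0).add
            ((integrableOn_Ioi_one_add_mul_rpow_neg hb hp).const_mul _))
          ((ae_restrict_iff' measurableSet_Ioi).2 (ae_of_all _ fun r hr =>
            heatGaussian_le_exp_add hs (le_of_lt hr)))
    _ = (a ^ 2 / 2)⁻¹ + exp (-(a ^ 2 / (4 * s))) * ((d - 2) * s)⁻¹ := by
      rw [integral_add (integrableOn_exp_mul_Ioi (by linarith) 0)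
        ((integrableOn_Ioi_one_add_mul_rpow_neg hb hp).const_mul _), integral_const_mul,
        integral_exp_neg_mul_Ioi (by positivity), integral_Ioi_one_add_mul_rpow_neg hb hp]
      ring
    _ ≤ (a ^ 2 / 2)⁻¹ + 2 * s / a ^ 2 * ((d - 2) * s)⁻¹ := by gcongr
    _ ≤ 2 * d / ((d - 2) * a ^ 2) := by
      field_simp
      gcongr
      linarith

end Bounds

lemma integral_heatKernel_mul_rpow_neg_two_le {d : ℕ} (hd : 2 < d) {x : EuclideanSpace ℝ (Fin d)}
    (hx : x ≠ 0) {s : ℝ} (hs : 0 < s) :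
    ∫ y, heatKernel d s y * ‖y - x‖ ^ (-2 : ℝ) ≤
      min (2 * d / ((d - 2) * ‖x‖ ^ 2)) (((d : ℝ) - 2)⁻¹ / s) := by
  have hinv := integral_heatGaussian_le_inv (a := ‖x‖) hd hs
  rw [mul_inv, ← div_eq_mul_inv] at hinv
  rw [integral_heatKernel_mul_rpow_neg_two (by omega) hs]
  exact le_min (integral_heatGaussian_le_div_sq hd hs (norm_ne_zero_iff.2 hx)) hinv

section TimeIntegral

variable {A B : ℝ}

lemma integrableOn_min_div (hA : 0 ≤ A) (hB : 0 ≤ B) (t : ℝ) :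
    IntegrableOn (fun s => min A (B / s)) (Ioc 0 t) :=
  (integrableOn_const (C := A) measure_Ioc_lt_top.ne).mono' (by fun_prop)
    ((ae_restrict_iff' measurableSet_Ioc).2 (ae_of_all _ fun s hs => by
      rw [norm_of_nonneg (le_min hA (div_nonneg hB hs.1.le))]
      exact min_le_left _ _))

lemma integral_Ioc_min_div_le (hA : 0 ≤ A) (hB : 0 ≤ B) {c : ℝ} (hc : 0 < c) (t : ℝ) :
    ∫ s in Ioc 0 t, min A (B / s) ≤ A * c + B * max (log (t / c)) 0 := by
  have hint := integrableOn_min_div hA hB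
  have hhead : ∫ s in Ioc 0 c, min A (B / s) ≤ A * c := by
    calc _ ≤ ∫ _ in Ioc 0 c, A :=
          setIntegral_mono_on (hint c) (integrableOn_const measure_Ioc_lt_top.ne)
            measurableSet_Ioc fun s _ => min_le_left _ _
      _ = A * c := by simp [hc.le, mul_comm]
  rcases le_total t c with htc | hct
  · calc _ ≤ ∫ s in Ioc 0 c, min A (B / s) :=
          setIntegral_mono_set (hint c)
            ((ae_restrict_iff' measurableSet_Ioc).2 (ae_of_all _ fun s hs =>
              le_min hA (div_nonneg hB hs.1.le)))
            (Ioc_subset_Ioc_right htc).eventuallyLE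
      _ ≤ A * c := hhead
      _ ≤ _ := le_add_of_nonneg_right (by positivity)
  have hinv : IntegrableOn (fun s => B * s⁻¹) (Ioc c t) :=
    ((continuousOn_const.mul (continuousOn_inv₀.mono fun s hs =>
      (hc.trans_le hs.1).ne')).integrableOn_Icc).mono_set Ioc_subset_Icc_self
  have htail : ∫ s in Ioc c t, min A (B / s) ≤ B * log (t / c) := by
    calc _ ≤ ∫ s in Ioc c t, B * s⁻¹ :=
          setIntegral_mono_on ((hint t).mono_set (Ioc_subset_Ioc_left hc.le)) hinv
            measurableSet_Ioc fun s _ => (min_le_right _ _).trans_eq (div_eq_mul_inv _ _)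
      _ = B * log (t / c) := by
        rw [integral_const_mul, ← intervalIntegral.integral_of_le hct,
          integral_inv_of_pos hc (hc.trans_le hct)]
  rw [← Ioc_union_Ioc_eq_Ioc hc.le hct, setIntegral_union (Ioc_disjoint_Ioc_of_le le_rfl)
    measurableSet_Ioc ((hint t).mono_set (Ioc_subset_Ioc_right hct))
    ((hint t).mono_set (Ioc_subset_Ioc_left hc.le))]
  exact add_le_add hhead (htail.trans (mul_le_mul_of_nonneg_left (le_max_left _ _) hB))

end TimeIntegral

theorem time_integral_inverse_square_bound (d : ℕ) (hd : 3 ≤ d)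
    (x : EuclideanSpace ℝ (Fin d)) (hx : x ≠ 0) (t : ℝ) (ht : 0 ≤ t) :
    (∫ s in Set.Ioc (0 : ℝ) t, ∫ y, heatKernel d s y * ‖y - x‖ ^ (-2 : ℝ)) ≤
      2 / ((d : ℝ) - 2) * (max (Real.log (1 / ‖x‖)) 0 + 1 + Real.sqrt d * Real.sqrt t) := by
  have hd2 : (0 : ℝ) < d - 2 := by
    have : (3 : ℝ) ≤ d := by exact_mod_cast hd
    linarith
  have ha : ‖x‖ ≠ 0 := norm_ne_zero_iff.2 hx
  have hc : 0 < ‖x‖ ^ 2 / (2 * d) := by positivity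
  calc _ ≤ ∫ s in Ioc 0 t, min (2 * d / ((d - 2) * ‖x‖ ^ 2)) (((d : ℝ) - 2)⁻¹ / s) :=
        integral_mono_of_nonneg
          ((ae_restrict_iff' measurableSet_Ioc).2 (ae_of_all _ fun s hs =>
            integral_nonneg fun y => mul_nonneg (heatKernel_nonneg hs.1.le y) (by positivity)))
          (integrableOn_min_div (by positivity) (by positivity) t)
          ((ae_restrict_iff' measurableSet_Ioc).2 (ae_of_all _ fun s hs =>
            integral_heatKernel_mul_rpow_neg_two_le hd hx hs.1))
    _ ≤ 2 * d / ((d - 2) * ‖x‖ ^ 2) * (‖x‖ ^ 2 / (2 * d)) +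
          ((d : ℝ) - 2)⁻¹ * max (log (t / (‖x‖ ^ 2 / (2 * d)))) 0 :=
        integral_Ioc_min_div_le (by positivity) (by positivity) hc t
    _ ≤ _ := by
      have hlog := max_log_two_mul_div_sq_le ha (mul_nonneg d.cast_nonneg ht)
      have hAc : 2 * d / ((d - 2) * ‖x‖ ^ 2) * (‖x‖ ^ 2 / (2 * d)) = ((d : ℝ) - 2)⁻¹ := by
        field_simp
      rw [hAc, ← sqrt_mul d.cast_nonneg, div_eq_mul_inv 2,
        show t / (‖x‖ ^ 2 / (2 * d)) = 2 * (d * t) / ‖x‖ ^ 2 by field_simp]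
      nlinarith [mul_le_mul_of_nonneg_left hlog (inv_pos.2 hd2).le, inv_pos.2 hd2]
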